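/- arXiv:math/0511465 — 2 statements merged into one kernel-verified Lean document; each statement's English description precedes it below -/
import Mathlib

section
/- Let γ be an automorphism (without inversion) of a tree T sending an oriented edge e to a distinct oriented edge e', and suppose there is an oriented geodesic edge-path containing both e and e' with compatible orientations. Then γ has no fixed point in T (γ is hyperbolic), and its translation axis contains e and e'. -/
/-!
With `ℓ = j - i`, the `γ`-translates of the segment `p i, …, p (j + 1)` overlap in an edge
and chain into a walk without backtracking, which in a tree is a geodesic; hence
`d(p i, γᵏ (p i)) = k ℓ`. On the other hand `d(x, γᵏ x) ≤ k d(x, γ x)` for every vertex `x`,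
so the triangle inequality `k ℓ ≤ 2 d(p i, x) + k d(x, γ x)` for large `k` forces
`d(x, γ x) ≥ ℓ > 0`, with equality at the endpoints of both edges.
-/

namespace SimpleGraph

variable {V V' : Type*} {G : SimpleGraph V} {G' : SimpleGraph V'}

lemma Iso.edist_map_le (φ : G ≃g G') (u v : V) : G'.edist (φ u) (φ v) ≤ G.edist u v :=
  le_sInf <| Set.forall_mem_range.2 fun w => (edist_le (w.map φ.toHom)).trans_eq (by simp)

lemma Iso.edist_map (φ : G ≃g G') (u v : V) : G'.edist (φ u) (φ v) = G.edist u v :=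
  (φ.edist_map_le u v).antisymm <| by simpa using φ.symm.edist_map_le (φ u) (φ v)

lemma Iso.dist_map (φ : G ≃g G') (u v : V) : G'.dist (φ u) (φ v) = G.dist u v := by
  simp only [dist, φ.edist_map]

lemma IsTree.eq_of_adj_of_dist_add_one (hT : G.IsTree) {a u v w : V}
    (hu : G.Adj u v) (hw : G.Adj w v)
    (hdu : G.dist a u + 1 = G.dist a v) (hdw : G.dist a w + 1 = G.dist a v) : u = w := by
  obtain ⟨P, hP⟩ := hT.connected.exists_walk_length_eq_dist a u
  obtain ⟨Q, hQ⟩ := hT.connected.exists_walk_length_eq_dist a w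
  have hPu : (P.concat hu).IsPath :=
    (P.concat hu).isPath_of_length_eq_dist (by rw [Walk.length_concat, hP, hdu])
  have hQw : (Q.concat hw).IsPath :=
    (Q.concat hw).isPath_of_length_eq_dist (by rw [Walk.length_concat, hQ, hdw])
  have hPQ : P.concat hu = Q.concat hw :=
    Subtype.mk.inj <| (hT.isAcyclic.subsingleton_path a v).elim ⟨_, hPu⟩ ⟨_, hQw⟩
  exact (Walk.concat_inj hPQ).1

lemma IsTree.dist_add_one_of_adj_of_adj (hT : G.IsTree) {a u v w : V}
    (huv : G.Adj u v) (hvw : G.Adj v w) (huw : u ≠ w) (h : G.dist a u + 1 = G.dist a v) :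
    G.dist a v + 1 = G.dist a w := by
  rcases hT.dist_eq_dist_add_one_of_adj a hvw with hwv | hvw'
  · exact absurd (hT.eq_of_adj_of_dist_add_one huv hvw.symm h hwv.symm) huw
  · exact hvw'.symm

lemma IsTree.dist_add_of_nonbacktracking (hT : G.IsTree) {a : V} {r : ℕ → V} {m : ℕ}
    (hadj : ∀ t < m, G.Adj (r t) (r (t + 1))) (hnb : ∀ t, t + 2 ≤ m → r t ≠ r (t + 2))
    (h1 : G.dist a (r 0) + 1 = G.dist a (r 1)) :
    ∀ t ≤ m, G.dist a (r 0) + t = G.dist a (r t) := by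
  have step : ∀ t, t + 1 ≤ m →
      G.dist a (r 0) + t = G.dist a (r t) ∧ G.dist a (r 0) + (t + 1) = G.dist a (r (t + 1)) := by
    intro t
    induction t with
    | zero => exact fun _ => ⟨rfl, h1⟩
    | succ t ih =>
      intro ht
      obtain ⟨ht₀, ht₁⟩ := ih (by omega)
      refine ⟨ht₁, ?_⟩
      have := hT.dist_add_one_of_adj_of_adj (a := a) (hadj t (by omega)) (hadj (t + 1) (by omega))
        (hnb t (by omega)) (by omega)
      omega
  rintro (_ | t) ht
  · rfl
  · exact (step t ht).2

lemma Connected.dist_pow_apply_le (hG : G.Connected) (γ : G ≃g G) (x : V) (k : ℕ) :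
    G.dist x ((γ ^ k) x) ≤ k * G.dist x (γ x) := by
  induction k with
  | zero => simp
  | succ k ih =>
    have hcomm : (γ ^ (k + 1)) x = γ ((γ ^ k) x) := by rw [pow_succ', RelIso.mul_apply]
    have hshift : G.dist ((γ ^ k) x) (γ ((γ ^ k) x)) = G.dist x (γ x) := by
      rw [← RelIso.mul_apply, (Commute.self_pow γ k).eq, RelIso.mul_apply, Iso.dist_map]
    calc G.dist x ((γ ^ (k + 1)) x)
        ≤ G.dist x ((γ ^ k) x) + G.dist ((γ ^ k) x) (γ ((γ ^ k) x)) :=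
          hcomm ▸ hG.dist_triangle
      _ ≤ (k + 1) * G.dist x (γ x) := by rw [hshift]; linarith

lemma Connected.le_dist_apply_of_forall_le_dist_pow (hG : G.Connected) (γ : G ≃g G)
    {a : V} {ℓ : ℕ} (h : ∀ k : ℕ, k * ℓ ≤ G.dist a ((γ ^ k) a)) (x : V) :
    ℓ ≤ G.dist x (γ x) := by
  set D := G.dist a x
  have hk : ∀ k : ℕ, k * ℓ ≤ 2 * D + k * G.dist x (γ x) := fun k =>
    calc k * ℓ ≤ G.dist a ((γ ^ k) a) := h k
      _ ≤ G.dist a x + (G.dist x ((γ ^ k) x) + G.dist ((γ ^ k) x) ((γ ^ k) a)) :=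
          hG.dist_triangle.trans (Nat.add_le_add_left hG.dist_triangle _)
      _ ≤ 2 * D + k * G.dist x (γ x) := by
          have hback : G.dist ((γ ^ k) x) ((γ ^ k) a) = D := by rw [Iso.dist_map, dist_comm]
          have := hG.dist_pow_apply_le γ x k
          omega
  by_contra! hlt
  have := hk (2 * D + 1)
  nlinarith

lemma IsTree.dist_pow_apply_of_apply_edge (hT : G.IsTree) (γ : G ≃g G) {p : ℕ → V} {ℓ : ℕ}
    (hadj : ∀ t ≤ ℓ, G.Adj (p t) (p (t + 1))) (hnb : ∀ t < ℓ, p t ≠ p (t + 2))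
    (hγ : γ (p 0) = p ℓ ∧ γ (p 1) = p (ℓ + 1)) (k : ℕ) :
    G.dist (p 0) ((γ ^ k) (p 0)) = k * ℓ ∧
      G.dist (p 0) ((γ ^ k) (p 0)) + 1 = G.dist (p 0) ((γ ^ k) (p 1)) := by
  -- the second conjunct (the `k`-th translate of the edge points away from `p 0`) is what
  -- lets the induction continue along the next translate of the path
  induction k with
  | zero => simpa using (dist_eq_one_iff_adj.2 (hadj 0 (Nat.zero_le _))).symm
  | succ k ih =>
    have hmove := hT.dist_add_of_nonbacktracking (a := p 0) (r := fun t => (γ ^ k) (p t))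
      (m := ℓ + 1) (fun t ht => (γ ^ k).map_adj_iff.2 (hadj t (by omega)))
      (fun t ht h => hnb t (by omega) ((γ ^ k).injective h)) ih.2
    simp only [pow_succ, RelIso.mul_apply, hγ]
    have h₀ := hmove ℓ (by omega)
    have h₁ := hmove (ℓ + 1) le_rfl
    constructor <;> linarith [ih.1]

end SimpleGraph

open SimpleGraph

/-- If an automorphism `γ` of a tree sends the oriented edge
`(p i, p (i+1))` of a geodesic edge-path `p` to the distinct later oriented
edge `(p j, p (j+1))` of the same path (compatible orientations), then `γ`
has no fixed point, and its translation axis (the set of minimally displaced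
points) contains both edges. -/
theorem stmt_7 {V : Type*} (G : SimpleGraph V) (hT : G.IsTree)
    (γ : G ≃g G) (n : ℕ) (p : ℕ → V)
    (hgeo : ∀ a b : ℕ, a ≤ b → b ≤ n → G.dist (p a) (p b) = b - a)
    (hadj : ∀ i < n, G.Adj (p i) (p (i + 1)))
    (i j : ℕ) (hij : i < j) (hjn : j + 1 ≤ n)
    (he : γ (p i) = p j ∧ γ (p (i + 1)) = p (j + 1)) :
    (∀ x : V, γ x ≠ x) ∧
      ∀ x ∈ ({p i, p (i + 1), p j, p (j + 1)} : Set V),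
        G.dist x (γ x) = sInf (Set.range fun y : V => G.dist y (γ y)) := by
  have hji : i + (j - i) = j := by omega
  have hescape := hT.dist_pow_apply_of_apply_edge γ (p := fun t => p (i + t)) (ℓ := j - i)
    (fun t ht => hadj _ (by omega))
    (fun t ht h => by
      have := hgeo (i + t) (i + (t + 2)) (by omega) (by omega)
      rw [h, SimpleGraph.dist_self] at this
      omega)
    (by simpa [hji, ← Nat.add_assoc] using he)
  have hmin : ∀ x, j - i ≤ G.dist x (γ x) := hT.connected.le_dist_apply_of_forall_le_dist_pow γ
    (a := p i) fun k => (hescape k).1.ge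
  have hdisp : ∀ x ∈ ({p i, p (i + 1), p j, p (j + 1)} : Set V), G.dist x (γ x) = j - i := by
    have hpi : G.dist (p i) (γ (p i)) = j - i := by rw [he.1, hgeo i j (by omega) (by omega)]
    have hpi1 : G.dist (p (i + 1)) (γ (p (i + 1))) = j - i := by
      rw [he.2, hgeo _ _ (by omega) (by omega)]; omega
    rintro x (rfl | rfl | rfl | rfl)
    · exact hpi
    · exact hpi1
    · rw [← he.1, Iso.dist_map, hpi]
    · rw [← he.2, Iso.dist_map, hpi1]
  refine ⟨fun x hx => ?_, fun x hx => ?_⟩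
  · have := hmin x
    rw [hx, SimpleGraph.dist_self] at this
    omega
  · have hleast : IsLeast (Set.range fun y : V => G.dist y (γ y)) (j - i) :=
      ⟨⟨p i, hdisp _ (by simp)⟩, Set.forall_mem_range.2 hmin⟩
    rw [hdisp x hx, hleast.csInf_eq]
end

section
/- For each n ∈ ℕ let q_n = 2^{2^n} and Γ_n = (ℤ/2ℤ)^{q_n}, with the natural inclusions Γ_n ↪ Γ_{n+1}. Let T be the Bass–Serre tree of the ray of groups with vertex groups Γ_0, Γ_1, Γ_2, … and edge groups Γ_0, Γ_1, … (edge between the n-th and (n+1)-st vertex carrying Γ_n, with monomorphisms the identity into Γ_n and the inclusion into Γ_{n+1}), and let Γ be its fundamental group. Then for a vertex x₀ of T above the origin, the ball B(x₀, 2n) contains at least q_{n−1} − 1 points of the orbit Γx₀, and consequently the critical exponent δ_Γ = +∞. -/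
/-!
An element fixing a vertex `y` moves `x₀` by at most `2 d(x₀, y)`, and by orbit–stabilizer the
`Γ_y`-orbit of `x₀` has `|Γ_y| / |Γ_{x₀} ∩ Γ_y|` points. Along the ray this puts at least
`2^{2^{2^n}} / 4` orbit points in `B(x₀, 2n)`, and all `2^{2^{2^n}} ≥ 2^{n²}` elements of `Γ_{x_n}`
at displacement at most `2n`. No exponential weight `e^{-2n|s|}` compensates such superexponential
growth, so the Poincaré series diverges for every `s`.
-/

open SimpleGraph

lemma Nat.two_mul_le_two_pow (n : ℕ) : 2 * n ≤ 2 ^ n := by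
  cases n with
  | zero => simp
  | succ m =>
    have := Nat.lt_two_pow_self (n := m)
    rw [pow_succ]
    omega

lemma Nat.mul_self_le_two_pow_two_pow (n : ℕ) : n * n ≤ 2 ^ 2 ^ n :=
  calc n * n ≤ 2 ^ n * 2 ^ n := Nat.mul_self_le_mul_self Nat.lt_two_pow_self.le
    _ = 2 ^ (2 * n) := by rw [← pow_add, two_mul]
    _ ≤ 2 ^ 2 ^ n := Nat.pow_le_pow_right two_pos (Nat.two_mul_le_two_pow n)

lemma Nat.two_pow_sub_one_add_two_le (n : ℕ) (hn : 1 ≤ n) : 2 ^ (n - 1) + 2 ≤ 2 ^ 2 ^ n := by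
  have h₁ : 2 ^ (n - 1) ≤ 2 ^ n := Nat.pow_le_pow_right two_pos (Nat.sub_le n 1)
  have h₂ : 2 ≤ 2 ^ n := by simpa using Nat.pow_le_pow_right two_pos hn
  calc 2 ^ (n - 1) + 2 ≤ 2 ^ (n + 1) := by rw [pow_succ]; omega
    _ ≤ 2 ^ 2 ^ n := Nat.pow_le_pow_right two_pos Nat.lt_two_pow_self

namespace SimpleGraph

variable {V : Type*} {G : SimpleGraph V}

lemma Connected.dist_map_le {W : Type*} {G' : SimpleGraph W} (hG : G.Connected) (f : G →g G')
    (u v : V) : G'.dist (f u) (f v) ≤ G.dist u v := by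
  obtain ⟨p, hp⟩ := hG.exists_walk_length_eq_dist u v
  simpa [hp] using dist_le (p.map f)

lemma Connected.finite_setOf_dist_le [G.LocallyFinite] (hG : G.Connected) (c : V) (r : ℕ) :
    {v | G.dist c v ≤ r}.Finite := by
  induction r with
  | zero => simp [hG.dist_eq_zero_iff]
  | succ r ih =>
    refine ((ih.biUnion fun u _ => (G.neighborSet u).toFinite).insert c).subset ?_
    intro v hv
    obtain rfl | hvc := eq_or_ne v c
    · exact Set.mem_insert _ _
    obtain ⟨p, hp⟩ := hG.exists_walk_length_eq_dist v c
    cases p with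
    | nil => exact absurd rfl hvc
    | @cons _ u _ h q =>
      have hq : G.dist c u ≤ r := by
        have hv : G.dist c v ≤ r + 1 := hv
        have hqc := dist_le q
        rw [Walk.length_cons, dist_comm] at hp
        rw [dist_comm]
        omega
      exact Set.mem_insert_of_mem _ (Set.mem_biUnion hq h.symm)

variable {Γ : Type*} [Group Γ] [MulAction Γ V]

lemma Connected.dist_smul_smul (hG : G.Connected)
    (hAdj : ∀ (γ : Γ) (u v : V), G.Adj u v → G.Adj (γ • u) (γ • v)) (γ : Γ) (u v : V) :
    G.dist (γ • u) (γ • v) = G.dist u v := by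
  have hle : ∀ (δ : Γ) (a b : V), G.dist (δ • a) (δ • b) ≤ G.dist a b :=
    fun δ => hG.dist_map_le ⟨(δ • ·), hAdj δ _ _⟩
  refine (hle γ u v).antisymm ?_
  simpa using hle γ⁻¹ (γ • u) (γ • v)

lemma Connected.dist_smul_le_of_mem_stabilizer (hG : G.Connected)
    (hAdj : ∀ (γ : Γ) (u v : V), G.Adj u v → G.Adj (γ • u) (γ • v)) {x y : V} {γ : Γ}
    (hγ : γ ∈ MulAction.stabilizer Γ y) : G.dist x (γ • x) ≤ 2 * G.dist x y := by
  have hy : G.dist y (γ • x) = G.dist x y := by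
    have := hG.dist_smul_smul hAdj γ y x
    rw [MulAction.mem_stabilizer_iff.mp hγ] at this
    rw [this, dist_comm]
  calc G.dist x (γ • x) ≤ G.dist x y + G.dist y (γ • x) := hG.dist_triangle
    _ = 2 * G.dist x y := by rw [hy, two_mul]

end SimpleGraph

lemma MulAction.card_subgroup_eq_card_orbit_mul_card_inf_stabilizer {Γ α : Type*} [Group Γ]
    [MulAction Γ α] (H : Subgroup Γ) (a : α) :
    Nat.card H = Nat.card (orbit H a) * Nat.card ↥(stabilizer Γ a ⊓ H) := by
  have hstab : stabilizer H a = (stabilizer Γ a ⊓ H).subgroupOf H := by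
    rw [Subgroup.inf_subgroupOf_right]
    rfl
  rw [← (stabilizer H a).card_mul_index, index_stabilizer, Nat.card_coe_set_eq, mul_comm,
    hstab, Nat.card_congr (Subgroup.subgroupOfEquivOfLe inf_le_right).toEquiv]

lemma SimpleGraph.Connected.card_stabilizer_le_mul_card_orbit_inter_ball {V Γ : Type*}
    {G : SimpleGraph V} [G.LocallyFinite] [Group Γ] [MulAction Γ V] (hG : G.Connected)
    (hAdj : ∀ (γ : Γ) (u v : V), G.Adj u v → G.Adj (γ • u) (γ • v)) (x₀ y : V) :
    Nat.card (MulAction.stabilizer Γ y) ≤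
      Nat.card ↥(MulAction.stabilizer Γ x₀ ⊓ MulAction.stabilizer Γ y) *
        Nat.card {v : V // v ∈ MulAction.orbit Γ x₀ ∧ G.dist x₀ v ≤ 2 * G.dist x₀ y} := by
  have := (hG.finite_setOf_dist_le x₀ (2 * G.dist x₀ y)).to_subtype
  have : Finite {v : V // v ∈ MulAction.orbit Γ x₀ ∧ G.dist x₀ v ≤ 2 * G.dist x₀ y} :=
    Finite.of_injective (fun v => (⟨v.1, v.2.2⟩ : {v | G.dist x₀ v ≤ 2 * G.dist x₀ y}))
      (fun _ _ h => Subtype.ext (by simpa using congrArg Subtype.val h))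
  rw [MulAction.card_subgroup_eq_card_orbit_mul_card_inf_stabilizer _ x₀, mul_comm]
  refine Nat.mul_le_mul_left _ (Nat.card_le_card_of_injective
    (fun v => ⟨v.1, ?_, ?_⟩) fun _ _ h => Subtype.ext (by simpa using congrArg Subtype.val h))
  · obtain ⟨γ, hγ⟩ := v.2
    exact ⟨γ, hγ⟩
  · obtain ⟨γ, hγ⟩ := v.2
    rw [← hγ]
    exact hG.dist_smul_le_of_mem_stabilizer hAdj γ.2

lemma nat_card_mul_exp_le_tsum {ι : Type*} {d : ι → ℕ} {s : ℝ}
    (hS : Summable fun i => Real.exp (-s * d i)) {F : Set ι} (hF : F.Finite) {R : ℕ}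
    (hR : ∀ i ∈ F, d i ≤ R) :
    Nat.card F * Real.exp (-(|s| * R)) ≤ ∑' i, Real.exp (-s * d i) := by
  have hterm : ∀ i ∈ hF.toFinset, Real.exp (-(|s| * R)) ≤ Real.exp (-s * d i) := by
    intro i hi
    have hdi : (d i : ℝ) ≤ R := by exact_mod_cast hR i (hF.mem_toFinset.mp hi)
    have : s * d i ≤ |s| * R :=
      (mul_le_mul_of_nonneg_right (le_abs_self s) (Nat.cast_nonneg _)).trans
        (mul_le_mul_of_nonneg_left hdi (abs_nonneg s))
    exact Real.exp_le_exp.mpr (by linarith)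
  calc Nat.card F * Real.exp (-(|s| * R))
      = hF.toFinset.card • Real.exp (-(|s| * R)) := by
        rw [Nat.card_eq_card_finite_toFinset hF, nsmul_eq_mul]
    _ ≤ ∑ i ∈ hF.toFinset, Real.exp (-s * d i) := Finset.card_nsmul_le_sum _ _ _ hterm
    _ ≤ ∑' i, Real.exp (-s * d i) := hS.sum_le_tsum _ fun i _ => (Real.exp_pos _).le

lemma not_summable_exp_of_two_pow_mul_self_le_card {ι : Type*} (d : ι → ℕ) (k : ℕ)
    (F : ℕ → Set ι) (hF : ∀ n, ∀ i ∈ F n, d i ≤ k * n)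
    (hcard : ∀ n, 2 ^ (n * n) ≤ Nat.card (F n)) (s : ℝ) :
    ¬ Summable fun i => Real.exp (-s * d i) := by
  intro hS
  set C := ∑' i, Real.exp (-s * d i)
  set c := Real.exp (|s| * k)
  have hc : 1 ≤ c := Real.one_le_exp (by positivity)
  have hC : 0 ≤ C := tsum_nonneg fun i => (Real.exp_pos _).le
  have hbound : ∀ n : ℕ, ((2 : ℝ) ^ n / c) ^ n ≤ C := by
    intro n
    have hfin : (F n).Finite :=
      Nat.finite_of_card_ne_zero ((Nat.two_pow_pos _).trans_le (hcard n)).ne'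
    have hcn : Real.exp (-(|s| * ↑(k * n))) = (c ^ n)⁻¹ := by
      rw [← Real.exp_nat_mul, ← Real.exp_neg]
      push_cast
      ring_nf
    have hcard' : ((2 : ℝ) ^ n) ^ n ≤ Nat.card (F n) := by
      rw [← pow_mul]
      exact_mod_cast hcard n
    calc ((2 : ℝ) ^ n / c) ^ n = ((2 : ℝ) ^ n) ^ n * (c ^ n)⁻¹ := by rw [div_pow, div_eq_mul_inv]
      _ ≤ Nat.card (F n) * Real.exp (-(|s| * ↑(k * n))) := by
        rw [hcn]
        gcongr
      _ ≤ C := nat_card_mul_exp_le_tsum hS hfin (hF n)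
  obtain ⟨n, hn⟩ := pow_unbounded_of_one_lt (c * (C + 1)) one_lt_two
  have hlarge : C + 1 < 2 ^ n / c := by
    rw [lt_div_iff₀ (by positivity)]
    linarith
  have hn0 : n ≠ 0 := by
    rintro rfl
    nlinarith
  have hpow := le_self_pow₀ (by linarith : (1 : ℝ) ≤ 2 ^ n / c) hn0
  linarith [hbound n]

theorem stmt_16_general {V : Type*} (G : SimpleGraph V) (hT : G.IsTree) [G.LocallyFinite]
    (Γ : Type*) [Group Γ] [MulAction Γ V]
    (hAdj : ∀ (γ : Γ) (u v : V), G.Adj u v → G.Adj (γ • u) (γ • v))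
    (x₀ : V) (x : ℕ → V)
    (hgeo : ∀ n, G.dist x₀ (x n) = n)
    (hcard : ∀ n, Nat.card (MulAction.stabilizer Γ (x n)) = 2 ^ 2 ^ 2 ^ n)
    (hseg : ∀ n, Nat.card
      ↥(MulAction.stabilizer Γ x₀ ⊓ MulAction.stabilizer Γ (x n)) ≤ 2 ^ 2 ^ 2 ^ 0) :
    (∀ n : ℕ, 1 ≤ n →
      2 ^ 2 ^ (n - 1) - 1 ≤
        Nat.card {v : V // v ∈ MulAction.orbit Γ x₀ ∧ G.dist x₀ v ≤ 2 * n}) ∧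
    ∀ s : ℝ, ¬ Summable (fun γ : Γ => Real.exp (-s * (G.dist x₀ (γ • x₀) : ℝ))) := by
  have hG : G.Connected := hT.connected
  refine ⟨fun n hn => ?_, not_summable_exp_of_two_pow_mul_self_le_card _ 2
    (fun n => MulAction.stabilizer Γ (x n)) (fun n γ hγ => ?_) (fun n => ?_)⟩
  · have hball := (hG.card_stabilizer_le_mul_card_orbit_inter_ball hAdj x₀ (x n)).trans
      (Nat.mul_le_mul_right _ (hseg n))
    rw [hcard n, hgeo n] at hball
    have hq : 2 ^ 2 ^ (n - 1) * 2 ^ 2 ≤ 2 ^ 2 ^ 2 ^ n := by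
      rw [← pow_add]
      exact Nat.pow_le_pow_right two_pos (Nat.two_pow_sub_one_add_two_le n hn)
    exact (Nat.sub_le _ 1).trans
      (Nat.le_of_mul_le_mul_right (hq.trans (hball.trans_eq (mul_comm _ _))) (by norm_num))
  · simpa [hgeo n] using hG.dist_smul_le_of_mem_stabilizer (x := x₀) hAdj hγ
  · rw [SetLike.coe_sort_coe, hcard n]
    exact Nat.pow_le_pow_right two_pos (Nat.mul_self_le_two_pow_two_pow n)

/-- Nagao-type example: let `Γ` be the fundamental group of the ray of groups
with vertex groups `Γₙ = (ℤ/2ℤ)^{qₙ}`, `qₙ = 2^{2ⁿ}`, acting on the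
Bass–Serre tree `T`.  The Bass–Serre data are encoded by: a geodesic ray `x`
from `x₀` lifting the ray, nested vertex stabilizers along it, with
`|Γ_{xₙ}| = 2^{qₙ} = 2^{2^{2ⁿ}}`, and pointwise stabilizer of the initial
segment of cardinality at most `|Γ₀| = 2^{q₀} = 4`.  Then the ball `B(x₀,2n)`
contains at least `q_{n-1} − 1 = 2^{2^{n-1}} − 1` points of the orbit `Γx₀`,
and consequently the critical exponent of `Γ` is `+∞`: the Poincaré series
diverges for every `s`. -/
theorem stmt_16 {V : Type*} (G : SimpleGraph V) (hT : G.IsTree) [G.LocallyFinite]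
    (Γ : Type*) [Group Γ] [MulAction Γ V]
    (hAdj : ∀ (γ : Γ) (u v : V), G.Adj u v → G.Adj (γ • u) (γ • v))
    (x₀ : V) (x : ℕ → V) (hx0 : x 0 = x₀)
    (hadj : ∀ n, G.Adj (x n) (x (n + 1)))
    (hgeo : ∀ n, G.dist x₀ (x n) = n)
    (hnest : ∀ n, MulAction.stabilizer Γ (x n) ≤ MulAction.stabilizer Γ (x (n + 1)))
    (hcard : ∀ n, Nat.card (MulAction.stabilizer Γ (x n)) = 2 ^ 2 ^ 2 ^ n)
    (hseg : ∀ n, Nat.card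
      ↥(MulAction.stabilizer Γ x₀ ⊓ MulAction.stabilizer Γ (x n)) ≤ 2 ^ 2 ^ 2 ^ 0) :
    (∀ n : ℕ, 1 ≤ n →
      2 ^ 2 ^ (n - 1) - 1 ≤
        Nat.card {v : V // v ∈ MulAction.orbit Γ x₀ ∧ G.dist x₀ v ≤ 2 * n}) ∧
    ∀ s : ℝ, ¬ Summable (fun γ : Γ => Real.exp (-s * (G.dist x₀ (γ • x₀) : ℝ))) :=
  stmt_16_general G hT Γ hAdj x₀ x hgeo hcard hseg
end
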